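/- Let (T,ℓ) be a degree tree and let v, v' be two distinct nodes of T with v preceding v' in preorder; let w and w' be the certificates of v and v' respectively. Then w is not strictly between v' and w' in preorder; furthermore, if v' ≠ w', then w ≠ v'. -/

import Mathlib

/-! ### Dyck paths: `true` = up step, `false` = down step -/

/-- A Dyck word: every prefix has at least as many up steps as down steps,
and the whole word has equally many. -/
def IsDyck (w : List Bool) : Prop :=
  (∀ k ≤ w.length, (w.take k).count false ≤ (w.take k).count true) ∧
    w.count false = w.count true

instance : DecidablePred IsDyck := fun w => by
  unfold IsDyck; infer_instance

/-- `w` is a Dyck path of size `n` (length `2n`). -/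
def IsDyckOfSize (n : ℕ) (w : List Bool) : Prop := IsDyck w ∧ w.length = 2 * n

/-- The 0-based position of the `i`-th (1-based) up step of `w`. -/
def upPos (w : List Bool) (i : ℕ) : ℕ :=
  ((List.range w.length).filter (fun p => w.getD p false)).getD (i - 1) w.length

/-- The 0-based position of the down step matching the `i`-th (1-based) up step:
the unique down step such that the factor strictly between them is a Dyck word. -/
def matchPos (w : List Bool) (i : ℕ) : ℕ :=
  ((List.range w.length).filter (fun q =>
      decide (upPos w i < q) && !(w.getD q true) &&
        decide (IsDyck ((w.drop (upPos w i + 1)).take (q - (upPos w i + 1)))))).headD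
    w.length

/-- Bracket vector: `bracket w i` is the size (half-length) of the factor of `w`
strictly between the `i`-th up step and its matching down step. -/
def bracket (w : List Bool) (i : ℕ) : ℕ := (matchPos w i - (upPos w i + 1)) / 2

/-- The factor of `w` strictly between the `i`-th up step and its matching down step. -/
def Pslice (w : List Bool) (i : ℕ) : List Bool :=
  (w.drop (upPos w i + 1)).take (matchPos w i - (upPos w i + 1))

/-- `Type(w)_i`: `1` if the `i`-th up step is immediately followed by an up step, else `0`. -/
def typ (w : List Bool) (i : ℕ) : ℕ := if w.getD (upPos w i + 1) false then 1 else 0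

/-- Number of rising contacts: up steps starting on the x-axis. -/
def risingContacts (w : List Bool) : ℕ :=
  ((List.range w.length).filter (fun p =>
      w.getD p false && ((w.take p).count true == (w.take p).count false))).length

/-- Tamari order via bracket vectors. -/
def TamariLE (n : ℕ) (P Q : List Bool) : Prop :=
  ∀ i, 1 ≤ i → i ≤ n → bracket P i ≤ bracket Q i

/-- A Tamari interval of size `n`. -/
def IsTamariInterval (n : ℕ) (P Q : List Bool) : Prop :=
  IsDyckOfSize n P ∧ IsDyckOfSize n Q ∧ TamariLE n P Q

/-- A new interval of size `n` (Chapoton): `V_Q(1)` is maximal (the source states this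
condition as `V_Q(1) = n`, with its convention relating trees of size `n` to intervals of
size `n + 1`; for the strict-factor bracket vector of a path of size `n` this maximal
value is `n - 1`), and `V_Q(i) > 0` implies `V_P(i) ≤ V_Q(i+1)`. -/
def IsNewInterval (n : ℕ) (P Q : List Bool) : Prop :=
  IsTamariInterval n P Q ∧ bracket Q 1 + 1 = n ∧
    ∀ i, 1 ≤ i → i ≤ n → 0 < bracket Q i → bracket P i ≤ bracket Q (i + 1)

/-- Number of indices `1 ≤ i ≤ n` with `(Type(P)_i, Type(Q)_i) = (0,0)`. -/
def c00 (n : ℕ) (P Q : List Bool) : ℕ :=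
  ((Finset.Icc 1 n).filter (fun i => typ P i = 0 ∧ typ Q i = 0)).card

/-- Number of indices `1 ≤ i ≤ n` with `(Type(P)_i, Type(Q)_i) = (0,1)`. -/
def c01 (n : ℕ) (P Q : List Bool) : ℕ :=
  ((Finset.Icc 1 n).filter (fun i => typ P i = 0 ∧ typ Q i = 1)).card

/-- Number of indices `1 ≤ i ≤ n` with `(Type(P)_i, Type(Q)_i) = (1,1)`. -/
def c11 (n : ℕ) (P Q : List Bool) : ℕ :=
  ((Finset.Icc 1 n).filter (fun i => typ P i = 1 ∧ typ Q i = 1)).card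

/-! ### Plane trees with integer node labels -/

/-- A plane tree whose nodes carry labels in `ℤ`. -/
inductive LTree : Type where
  | node : ℤ → List LTree → LTree

instance : Inhabited LTree := ⟨.node 0 []⟩

/-- The label of the root. -/
def LTree.label : LTree → ℤ
  | .node l _ => l

/-- The list of children (subtrees) of the root, from left to right. -/
def LTree.children : LTree → List LTree
  | .node _ ts => ts

/-- Whether the root is a leaf. -/
def LTree.isLeaf (t : LTree) : Bool := t.children.isEmpty

mutual
/-- The size of a tree = number of edges. -/
def LTree.size : LTree → ℕ
  | .node _ ts => LTree.sizeList ts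
def LTree.sizeList : List LTree → ℕ
  | [] => 0
  | t :: ts => 1 + t.size + LTree.sizeList ts
end

/-- The label `a` of the leftmost descending edge of the root (0 for a leaf),
recovered from the node labels: `ℓ(v) = k - a + ℓ(v₁) + ⋯ + ℓ(v_k)`. -/
def LTree.aVal : LTree → ℤ
  | .node _ [] => 0
  | .node l ts => (ts.length : ℤ) + (ts.map LTree.label).sum - l

/-- `(T, ℓ)` is a degree tree: leaves are labeled `0` and every internal node `v`
with children `v₁, …, v_k` satisfies `ℓ(v) = k - a + ℓ(v₁) + ⋯ + ℓ(v_k)` for some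
`0 ≤ a ≤ ℓ(v₁)`. -/
inductive IsDegreeTree : LTree → Prop where
  | leaf : IsDegreeTree (.node 0 [])
  | internal (l a : ℤ) (t₁ : LTree) (ts : List LTree)
      (h₁ : IsDegreeTree t₁) (h : ∀ t ∈ ts, IsDegreeTree t)
      (ha₀ : 0 ≤ a) (ha₁ : a ≤ t₁.label)
      (hl : l = ((1 + ts.length : ℕ) : ℤ) - a + (t₁.label + (ts.map LTree.label).sum)) :
      IsDegreeTree (.node l (t₁ :: ts))

mutual
/-- The list of all subtrees of `T` (one for each node), in preorder. -/
def LTree.preSub : LTree → List LTree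
  | .node l ts => .node l ts :: LTree.preSubList ts
def LTree.preSubList : List LTree → List LTree
  | [] => []
  | t :: ts => t.preSub ++ LTree.preSubList ts
end

/-- The subtree induced by the `i`-th node (0-based) of `T` in preorder. -/
def LTree.nth (T : LTree) (i : ℕ) : LTree := T.preSub.getD i default

mutual
/-- Sum of the edge labels `ℓ_Λ(e)` over all edges of the tree (the leftmost
descending edge of each internal node carries `a`, all other edges carry `0`). -/
def LTree.eSum : LTree → ℤ
  | .node l ts => LTree.aVal (.node l ts) + LTree.eSumList ts
def LTree.eSumList : List LTree → ℤ
  | [] => 0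
  | t :: ts => t.eSum + LTree.eSumList ts
end

mutual
/-- The Dyck word of a plane tree under the classical bijection
(recording the depth evolution along the preorder traversal). -/
def LTree.toDyck : LTree → List Bool
  | .node _ ts => LTree.toDyckList ts
def LTree.toDyckList : List LTree → List Bool
  | [] => []
  | t :: ts => true :: (t.toDyck ++ (false :: LTree.toDyckList ts))
end

/-- The upper path `Q = u Q' d` of `I_T`, where `Q'` corresponds to `T`. -/
def Qpath (T : LTree) : List Bool := true :: (T.toDyck ++ [false])

/-! ### The certificate process -/

/-- The least index `> i` not colored red. -/
def nextBlack (red : Finset ℕ) (i : ℕ) : ℕ :=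
  Nat.find (p := fun j => i < j ∧ j ∉ red) (by
    refine ⟨red.sup id + i + 1, by omega, fun h => ?_⟩
    have := Finset.le_sup (f := id) h
    simp only [id_eq] at this
    omega)

/-- The `k`-th black (non-red) index after `i`. -/
def kthBlack (red : Finset ℕ) (i : ℕ) : ℕ → ℕ
  | 0 => i
  | k + 1 => nextBlack red (kthBlack red i k)

/-- The set of red nodes after processing the `k` nodes `n, n-1, …, n-k+1`
in reverse preorder; at the step for a non-leaf node `i` the first `r i` black
nodes after `i` are colored red. -/
def redGo (r : ℕ → ℕ) (lf : ℕ → Bool) (n : ℕ) : ℕ → Finset ℕ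
  | 0 => ∅
  | k + 1 =>
      let s := redGo r lf n k
      let i := n - k
      if lf i then s else s ∪ (Finset.Icc 1 (r i)).image (kthBlack s i)

/-- The certificate of node `i`: itself if `i` is a leaf, otherwise the node just
before the `(r i + 1)`-st black node after `i` at the step for `i`. -/
def certAux (r : ℕ → ℕ) (lf : ℕ → Bool) (n i : ℕ) : ℕ :=
  if lf i then i else kthBlack (redGo r lf n (n - i)) i (r i + 1) - 1

/-- The certificate (as a preorder index) of the `i`-th preorder node of `T`. -/
def cert (T : LTree) (i : ℕ) : ℕ :=
  certAux (fun j => (T.nth j).aVal.toNat) (fun j => (T.nth j).isLeaf) T.size i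

/-- `c(i)`: the number of nodes of `T` whose certificate is node `i`. -/
def certCount (T : LTree) (i : ℕ) : ℕ :=
  ((List.range (T.size + 1)).filter (fun j => cert T j == i)).length

/-- The lower path of `I_T`: concatenation of `u d^{c(v)}` over nodes in preorder. -/
def Ppath (T : LTree) : List Bool :=
  ((List.range (T.size + 1)).map (fun i => true :: List.replicate (certCount T i) false)).flatten

/-! ### Statistics on degree trees -/

/-- Number of leaf nodes. -/
def lnode (T : LTree) : ℕ := (T.preSub.filter (fun t => t.isLeaf)).length

/-- Number of zero nodes: internal nodes whose leftmost descending edge is labeled `0`. -/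
def znode (T : LTree) : ℕ :=
  (T.preSub.filter (fun t => !t.isLeaf && decide (t.aVal = 0))).length

/-- Number of positive nodes: internal nodes whose leftmost descending edge has positive label. -/
def pnode (T : LTree) : ℕ :=
  (T.preSub.filter (fun t => !t.isLeaf && decide (0 < t.aVal))).length

/-! ### Unlabeled shapes (for fixing `T` while varying `ℓ`) -/

/-- An unlabeled plane tree. -/
inductive PShape : Type where
  | node : List PShape → PShape

mutual
/-- The underlying unlabeled plane tree of a labeled tree. -/
def LTree.shape : LTree → PShape
  | .node _ ts => .node (LTree.shapeList ts)
def LTree.shapeList : List LTree → List PShape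
  | [] => []
  | t :: ts => t.shape :: LTree.shapeList ts
end

/-- The defining relations of `T_I`: `(T, ℓ) = T_I([P,Q])` for a new interval
`[P,Q]` of size `n+1`, i.e. `T` corresponds to `Q'` (where `Q = uQ'd`) under the
classical bijection, and the leftmost descending edge of the `i`-th preorder node
is labeled by the number of rising contacts of the factor of `P` strictly between
the `(i+1)`-st up step and its matching down step. -/
def TIrel (n : ℕ) (P Q : List Bool) (T : LTree) : Prop :=
  IsDegreeTree T ∧ T.size = n ∧ Q = Qpath T ∧
    ∀ i ≤ n, (T.nth i).children ≠ [] →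
      (T.nth i).aVal = (risingContacts (Pslice P (i + 1)) : ℤ)

/-! At the step for `j`, every node strictly after `j` up to and including its
certificate is coloured red, and red nodes stay red. At the later step for `i < j`, the node
following the certificate of `i` is black, so it cannot lie in `(j, cert j]`. This rules out
`j ≤ cert i < cert j`, which covers both claims. -/

section Colouring

variable (red : Finset ℕ)

lemma lt_nextBlack (i : ℕ) : i < nextBlack red i :=
  (Nat.find_spec (p := fun j => i < j ∧ j ∉ red) _).1

lemma nextBlack_notMem (i : ℕ) : nextBlack red i ∉ red :=
  (Nat.find_spec (p := fun j => i < j ∧ j ∉ red) _).2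

lemma nextBlack_le {i m : ℕ} (him : i < m) (hm : m ∉ red) : nextBlack red i ≤ m :=
  Nat.find_min' _ ⟨him, hm⟩

lemma le_kthBlack (i k : ℕ) : i ≤ kthBlack red i k := by
  induction k with
  | zero => exact le_rfl
  | succ k ih => exact ih.trans (lt_nextBlack red _).le

lemma lt_kthBlack_succ (i k : ℕ) : i < kthBlack red i (k + 1) :=
  (le_kthBlack red i k).trans_lt (lt_nextBlack red _)

lemma kthBlack_succ_notMem (i k : ℕ) : kthBlack red i (k + 1) ∉ red :=
  nextBlack_notMem red _

lemma exists_kthBlack_eq_of_notMem {i m : ℕ} (hm : m ∉ red) (him : i < m) :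
    ∀ {t}, m ≤ kthBlack red i t → ∃ t' ∈ Finset.Icc 1 t, kthBlack red i t' = m
  | 0, h => absurd h (by simpa [kthBlack] using him)
  | t + 1, h => by
    rcases le_or_gt m (kthBlack red i t) with hle | hlt
    · obtain ⟨t', ht', rfl⟩ := exists_kthBlack_eq_of_notMem hm him hle
      exact ⟨t', by simp only [Finset.mem_Icc] at ht' ⊢; omega, rfl⟩
    · exact ⟨t + 1, by simp, le_antisymm (nextBlack_le red hlt hm) h⟩

end Colouring

section Certificates

variable (r : ℕ → ℕ) (lf : ℕ → Bool) (n : ℕ)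

lemma redGo_mono : Monotone (redGo r lf n) := by
  refine monotone_nat_of_le_succ fun k => ?_
  simp only [redGo]
  split
  · exact le_rfl
  · exact Finset.subset_union_left

lemma mem_redGo_succ_of_lt_kthBlack {j m : ℕ} (hj : j ≤ n) (hlf : lf j = false) (hjm : j < m)
    (hm : m < kthBlack (redGo r lf n (n - j)) j (r j + 1)) :
    m ∈ redGo r lf n (n - j + 1) := by
  set s := redGo r lf n (n - j)
  have hstep : redGo r lf n (n - j + 1) = s ∪ (Finset.Icc 1 (r j)).image (kthBlack s j) := by
    simp only [redGo, Nat.sub_sub_self hj, hlf, Bool.false_eq_true, if_false, s]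
  rw [hstep, Finset.mem_union, Finset.mem_image]
  by_cases hms : m ∈ s
  · exact Or.inl hms
  · have hle : m ≤ kthBlack s j (r j) := by
      by_contra! hlt
      exact hm.not_ge (nextBlack_le s hlt hms)
    exact Or.inr (exists_kthBlack_eq_of_notMem s hms hjm hle)

lemma le_certAux (i : ℕ) : i ≤ certAux r lf n i := by
  unfold certAux
  split
  · exact le_rfl
  · have := lt_kthBlack_succ (redGo r lf n (n - i)) i (r i)
    omega

lemma mem_redGo_of_lt_of_le_certAux {i j m : ℕ} (hij : i < j) (hj : j ≤ n) (hjm : j < m)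
    (hm : m ≤ certAux r lf n j) : m ∈ redGo r lf n (n - i) := by
  have hlf : lf j = false := by
    cases hleaf : lf j
    · rfl
    · simp only [certAux, hleaf, if_true] at hm
      omega
  have hm' : m < kthBlack (redGo r lf n (n - j)) j (r j + 1) := by
    have := lt_kthBlack_succ (redGo r lf n (n - j)) j (r j)
    simp only [certAux, hlf, Bool.false_eq_true, if_false] at hm
    omega
  exact redGo_mono r lf n (by omega) (mem_redGo_succ_of_lt_kthBlack r lf n hj hlf hjm hm')

lemma certAux_add_one_notMem {i : ℕ} (hlf : lf i = false) :
    certAux r lf n i + 1 ∉ redGo r lf n (n - i) := by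
  have hgt := lt_kthBlack_succ (redGo r lf n (n - i)) i (r i)
  have hcert : certAux r lf n i + 1 = kthBlack (redGo r lf n (n - i)) i (r i + 1) := by
    simp only [certAux, hlf, Bool.false_eq_true, if_false]
    omega
  rw [hcert]
  exact kthBlack_succ_notMem _ i (r i)

theorem not_le_certAux_and_certAux_lt {i j : ℕ} (hij : i < j) (hj : j ≤ n) :
    ¬(j ≤ certAux r lf n i ∧ certAux r lf n i < certAux r lf n j) := by
  rintro ⟨hji, hlt⟩
  cases hlf : lf i
  · exact certAux_add_one_notMem r lf n hlf
      (mem_redGo_of_lt_of_le_certAux r lf n hij hj (by omega) hlt)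
  · simp only [certAux, hlf, if_true] at hji
    omega

end Certificates

theorem stmt6 (T : LTree) (hT : IsDegreeTree T) (i j : ℕ) (hij : i < j)
    (hj : j ≤ T.size) :
    ¬(j < cert T i ∧ cert T i < cert T j) ∧ (cert T j ≠ j → cert T i ≠ j) := by
  have key : ¬(j ≤ cert T i ∧ cert T i < cert T j) :=
    not_le_certAux_and_certAux_lt _ _ _ hij hj
  have hj_le : j ≤ cert T j := le_certAux _ _ _ j
  exact ⟨fun ⟨hlt, hlt'⟩ => key ⟨hlt.le, hlt'⟩, fun hjj hij' => key ⟨hij'.ge, by omega⟩⟩
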